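/- arXiv:1006.5020 — 2 statements merged into one kernel-verified Lean document; each statement's English description precedes it below -/
import Mathlib

section
/- Let I ⊂ K[x_0,…,x_n] be a Borel-fixed ideal whose quotient has constant Hilbert polynomial d (d points in ℙⁿ), generated in degree d, and let reg denote the regularity of its saturation. Then exactly d − reg consecutive DegLex-rational deformations (each replacing the DegLex-minimal minimal monomial x_1^{reg} x_0^{d−reg} of the Borel set {I_d} by the DegLex-maximal monomial of the complement involving a variable of index ≥ 2, which increases the regularity by exactly 1) lead from I to the lexsegment ideal L = (x_n,…,x_2, x_1^d)_{≥ d}. -/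
/-!
In degree `d` the complement of a Borel set `B` of `d` points consists of the pure powers
`x_1^k x_0^(d-k)` with `k < reg` together with the set `C` of missing monomials involving some
`x_i` with `i ≥ 2`, so `#C = d - reg`. While `reg < d`, exchanging `x_1^reg x_0^(d-reg)` for the
DegLex-maximal element `β` of `C` keeps the set Borel: an increasing move sends `β` to a
DegLex-larger monomial that still involves a high variable, hence into `B`, and the removed power
is reached by an increasing move only from `x_1^(reg-1) x_0^(d-reg+1) ∉ B`. The exchange keeps `d`
points and raises `reg` by one, so after `d - reg` steps `reg = d`, `C = ∅`, and what remains is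
the lexsegment.
-/

open Finset

/-- Elementary decreasing move `e⁻_i` : replace one factor `x_i` by `x_{i-1}`. -/
def downAt (i : ℕ) (α : ℕ → ℕ) : ℕ → ℕ :=
  fun k => if k = i then α i - 1 else if k = i - 1 then α (i - 1) + 1 else α k

/-- Elementary increasing move `e⁺_i` : replace one factor `x_i` by `x_{i+1}`. -/
def upAt (i : ℕ) (α : ℕ → ℕ) : ℕ → ℕ :=
  fun k => if k = i then α i - 1 else if k = i + 1 then α (i + 1) + 1 else α k

/-- `β` is obtained from `α` by one admissible decreasing move. -/
def DownStep (n : ℕ) (α β : ℕ → ℕ) : Prop :=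
  ∃ i, 1 ≤ i ∧ i ≤ n ∧ 0 < α i ∧ β = downAt i α

/-- `β` is obtained from `α` by one admissible increasing move. -/
def UpStep (n : ℕ) (α β : ℕ → ℕ) : Prop :=
  ∃ i, i < n ∧ 0 < α i ∧ β = upAt i α

/-- Borel partial order: `geB n α β` means `x^α ≥_B x^β`, i.e. `β` is reachable
from `α` by a finite sequence of decreasing moves. -/
def geB (n : ℕ) (α β : ℕ → ℕ) : Prop :=
  Relation.ReflTransGen (DownStep n) α β

/-- `Mon n r` : (exponents of) monomials of degree `r` in `x_0,…,x_n`, i.e. `𝒫(n,r)`. -/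
def Mon (n r : ℕ) : Set (ℕ → ℕ) :=
  {α | (∀ k, n < k → α k = 0) ∧ ∑ i ∈ Finset.range (n + 1), α i = r}

/-- A Borel set in `𝒫(n,r)`: closed under admissible increasing moves. -/
def IsBorelSet (n r : ℕ) (B : Set (ℕ → ℕ)) : Prop :=
  B ⊆ Mon n r ∧ ∀ α ∈ B, ∀ β, UpStep n α β → β ∈ B

/-- `σ(j) = ∑_{i=j}^n α_i`. -/
def sumFrom (n j : ℕ) (α : ℕ → ℕ) : ℕ := ∑ i ∈ Finset.Icc j n, α i

/-- Multiplication by the variable `x_i`. -/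
def addVar (i : ℕ) (α : ℕ → ℕ) : ℕ → ℕ := fun k => if k = i then α k + 1 else α k

/-- Division by the variable `x_i`. -/
def subVar (i : ℕ) (α : ℕ → ℕ) : ℕ → ℕ := fun k => if k = i then α k - 1 else α k

/-- The result of applying the composition of decreasing moves `(e⁻_l)^{μ l}` (over all `l`). -/
def applyMoves (μ α : ℕ → ℕ) : ℕ → ℕ := fun k => α k + μ (k + 1) - μ k

/-- The composition of decreasing moves encoded by `μ` is admissible on `α`. -/
def AdmissibleOn (μ α : ℕ → ℕ) : Prop := ∀ k, μ k ≤ α k + μ (k + 1)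

/-- `𝔉_α` : admissible compositions of decreasing moves with indices in `[1,j]`
sending `α` inside `B` (contains the identity `μ = 0` as soon as `α ∈ B`). -/
def MovesFam (j : ℕ) (α : ℕ → ℕ) (B : Set (ℕ → ℕ)) : Set (ℕ → ℕ) :=
  {μ | (∀ l, μ l ≠ 0 → 1 ≤ l ∧ l ≤ j) ∧ AdmissibleOn μ α ∧ applyMoves μ α ∈ B}

/-- `min x^γ` : least index of a variable dividing `x^γ`. -/
noncomputable def minIdx (γ : ℕ → ℕ) : ℕ := sInf {k | γ k ≠ 0}

/-- `x^α >_DegLex x^β` for monomials of the same degree (`x_n ≻ ⋯ ≻ x_0`). -/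
def degLexGT (α β : ℕ → ℕ) : Prop :=
  ∃ j, β j < α j ∧ ∀ k, j < k → α k = β k

/-- `x^α >_RevLex x^β` for monomials of the same degree (`x_n ≻ ⋯ ≻ x_0`). -/
def revLexGT (α β : ℕ → ℕ) : Prop :=
  ∃ j, α j < β j ∧ ∀ k, k < j → α k = β k

/-- The monomial `x_1^k x_0^{d-k}`. -/
def pure01 (d k : ℕ) : ℕ → ℕ :=
  fun m => if m = 1 then k else if m = 0 then d - k else 0

/-- For a Borel set `B` of degree-`d` monomials (points case), the regularity of the
saturation of `⟨B⟩` is the least `s` with `x_1^s x_0^{d-s} ∈ B`. -/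
noncomputable def regSat (d : ℕ) (B : Set (ℕ → ℕ)) : ℕ := sInf {s | pure01 d s ∈ B}

/-- Degree-`d` part of the lexsegment ideal `L = (x_n,…,x_2,x_1^d)`. -/
def lexSegPts (n d : ℕ) : Set (ℕ → ℕ) :=
  {α ∈ Mon n d | (∃ i, 2 ≤ i ∧ i ≤ n ∧ 0 < α i) ∨ d ≤ α 1}

/-- A monomial ideal in `K[x_0,…,x_n]`, given by its set of (exponents of) monomials. -/
def IsMonomialIdeal (n : ℕ) (S : Set (ℕ → ℕ)) : Prop :=
  (∀ α ∈ S, ∀ k, n < k → α k = 0) ∧ ∀ α ∈ S, ∀ k, k ≤ n → addVar k α ∈ S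

/-- Strongly stable (Borel-fixed in characteristic 0): `x^α ∈ I`, `x_i ∣ x^α`, `i < j ≤ n`
implies `x_j x^α / x_i ∈ I`. -/
def StronglyStable (n : ℕ) (S : Set (ℕ → ℕ)) : Prop :=
  ∀ α ∈ S, ∀ i j, i < j → j ≤ n → 0 < α i →
    (fun k => if k = i then α i - 1 else if k = j then α j + 1 else α k) ∈ S

/-- `x^α` is a minimal generator of the monomial ideal `S`. -/
def MinGen (n : ℕ) (S : Set (ℕ → ℕ)) (α : ℕ → ℕ) : Prop :=
  α ∈ S ∧ ∀ k, k ≤ n → 0 < α k → subVar k α ∉ S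

/-- One DegLex-rational deformation step for points: remove the minimal monomial
x_1^{reg} x_0^{d-reg} and insert the DegLex-greatest monomial of the complement
involving a variable of index ≥ 2. -/
def DefStep (n d : ℕ) (B B' : Set (ℕ → ℕ)) : Prop :=
  ∃ β ∈ Mon n d, β ∉ B ∧ (∃ i, 2 ≤ i ∧ i ≤ n ∧ 0 < β i) ∧
    (∀ γ ∈ Mon n d, γ ∉ B → (∃ i, 2 ≤ i ∧ i ≤ n ∧ 0 < γ i) → γ = β ∨ degLexGT β γ) ∧
    B' = insert β (B \ {pure01 d (regSat d B)})

def InvolvesHighVar (n : ℕ) (γ : ℕ → ℕ) : Prop := ∃ i, 2 ≤ i ∧ i ≤ n ∧ 0 < γ i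

def highCompl (n d : ℕ) (B : Set (ℕ → ℕ)) : Set (ℕ → ℕ) :=
  {γ | γ ∈ Mon n d \ B ∧ InvolvesHighVar n γ}

noncomputable def degLexMax (C : Set (ℕ → ℕ)) : ℕ → ℕ :=
  Classical.epsilon fun β => β ∈ C ∧ ∀ γ ∈ C, γ = β ∨ degLexGT β γ

noncomputable def deformStep (n d : ℕ) (B : Set (ℕ → ℕ)) : Set (ℕ → ℕ) :=
  insert (degLexMax (highCompl n d B)) (B \ {pure01 d (regSat d B)})

section DegLex

variable {n : ℕ} {α β γ : ℕ → ℕ}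

theorem degLexGT_irrefl (α : ℕ → ℕ) : ¬ degLexGT α α := fun ⟨_, h, _⟩ => lt_irrefl _ h

theorem degLexGT_trans (hαβ : degLexGT α β) (hβγ : degLexGT β γ) : degLexGT α γ := by
  obtain ⟨i, hi, hαβ⟩ := hαβ
  obtain ⟨j, hj, hβγ⟩ := hβγ
  rcases lt_trichotomy i j with h | rfl | h
  · exact ⟨j, by rw [hαβ j h]; exact hj,
      fun k hk => (hαβ k (h.trans hk)).trans (hβγ k hk)⟩
  · exact ⟨i, hj.trans hi, fun k hk => (hαβ k hk).trans (hβγ k hk)⟩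
  · exact ⟨i, by rw [← hβγ i h]; exact hi,
      fun k hk => (hαβ k hk).trans (hβγ k (h.trans hk))⟩

instance : IsStrictOrder (ℕ → ℕ) degLexGT where
  irrefl := degLexGT_irrefl
  trans _ _ _ := degLexGT_trans

theorem degLexGT_trichotomy (h : ∀ k, n < k → α k = β k) :
    α = β ∨ degLexGT α β ∨ degLexGT β α := by
  by_cases hαβ : α = β
  · exact Or.inl hαβ
  set S := {k | α k ≠ β k}
  have hbdd : BddAbove S := ⟨n, fun k hk => not_lt.1 fun hnk => hk (h k hnk)⟩
  have hmem : sSup S ∈ S := Nat.sSup_mem (Function.ne_iff.1 hαβ) hbdd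
  have hagree : ∀ k, sSup S < k → α k = β k := fun k hk =>
    not_not.1 fun hne => (le_csSup hbdd hne).not_gt hk
  rcases lt_or_gt_of_ne hmem with hlt | hgt
  · exact Or.inr (Or.inr ⟨_, hlt, fun k hk => (hagree k hk).symm⟩)
  · exact Or.inr (Or.inl ⟨_, hgt, hagree⟩)

end DegLex

section Monomials

variable {n d i k : ℕ} {α : ℕ → ℕ}

theorem apply_le_of_mem_Mon (hα : α ∈ Mon n d) (i : ℕ) : α i ≤ d := by
  rcases le_or_gt i n with hi | hi
  · exact hα.2 ▸ Finset.single_le_sum (fun j _ => Nat.zero_le (α j)) (mem_range.2 (by omega))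
  · simp [hα.1 i hi]

theorem finite_Mon : (Mon n d).Finite := by
  refine (Set.finite_range fun (g : Fin (n + 1) → Fin (d + 1)) (k : ℕ) =>
    if h : k < n + 1 then (g ⟨k, h⟩ : ℕ) else 0).subset fun α hα => ?_
  refine ⟨fun i => ⟨α i, Nat.lt_succ_of_le (apply_le_of_mem_Mon hα i)⟩,
    funext fun k => ?_⟩
  by_cases h : k < n + 1
  · simp [h]
  · simp [h, hα.1 k (by omega)]

theorem exists_degLexGT_max {C : Set (ℕ → ℕ)} (hC : C ⊆ Mon n d) (hne : C.Nonempty) :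
    ∃ β ∈ C, ∀ γ ∈ C, γ = β ∨ degLexGT β γ := by
  obtain ⟨⟨β, hβ⟩, -, hmax⟩ :=
    ((finite_Mon.subset hC).wellFoundedOn (r := degLexGT)).has_min
      Set.univ ⟨⟨_, hne.some_mem⟩, trivial⟩
  refine ⟨β, hβ, fun γ hγ => ?_⟩
  rcases degLexGT_trichotomy fun k hk => ((hC hγ).1 k hk).trans ((hC hβ).1 k hk).symm
    with h | h | h
  · exact Or.inl h
  · exact absurd h (hmax ⟨γ, hγ⟩ trivial)
  · exact Or.inr h

theorem degLexMax_spec {C : Set (ℕ → ℕ)} (hC : C ⊆ Mon n d) (hne : C.Nonempty) :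
    degLexMax C ∈ C ∧ ∀ γ ∈ C, γ = degLexMax C ∨ degLexGT (degLexMax C) γ :=
  Classical.epsilon_spec (exists_degLexGT_max hC hne)

theorem sum_range_eq_apply_zero_add_apply_one (hn : 1 ≤ n) {f : ℕ → ℕ}
    (hf : ∀ i, 2 ≤ i → f i = 0) :
    ∑ i ∈ range (n + 1), f i = f 0 + f 1 := by
  rw [← Finset.sum_subset (range_subset_range.2 (by omega : 2 ≤ n + 1))
    fun i _ hi => hf i (by simp at hi; omega)]
  simp [Finset.sum_range_succ]

theorem pure01_apply_of_two_le {m : ℕ} (hm : 2 ≤ m) : pure01 d k m = 0 := by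
  simp [pure01, show m ≠ 1 by omega, show m ≠ 0 by omega]

theorem pure01_injective (d : ℕ) : Function.Injective (pure01 d) :=
  fun _ _ h => congrFun h 1

theorem not_involvesHighVar_pure01 : ¬ InvolvesHighVar n (pure01 d k) :=
  fun ⟨_, hi, _, hpos⟩ => hpos.ne' (pure01_apply_of_two_le hi)

theorem pure01_mem_Mon (hn : 1 ≤ n) (hk : k ≤ d) : pure01 d k ∈ Mon n d := by
  refine ⟨fun m hm => pure01_apply_of_two_le (by omega), ?_⟩
  rw [sum_range_eq_apply_zero_add_apply_one hn fun m hm => pure01_apply_of_two_le hm]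
  simp [pure01]
  omega

theorem apply_eq_zero_of_not_involvesHighVar (hα : α ∈ Mon n d) (h : ¬ InvolvesHighVar n α)
    (hi : 2 ≤ i) : α i = 0 := by
  rcases le_or_gt i n with hin | hin
  · exact Nat.eq_zero_of_not_pos fun hpos => h ⟨i, hi, hin, hpos⟩
  · exact hα.1 i hin

theorem eq_pure01_of_not_involvesHighVar (hn : 1 ≤ n) (hα : α ∈ Mon n d)
    (h : ¬ InvolvesHighVar n α) : α = pure01 d (α 1) := by
  have hsum := hα.2
  rw [sum_range_eq_apply_zero_add_apply_one hn fun i hi =>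
    apply_eq_zero_of_not_involvesHighVar hα h hi] at hsum
  funext m
  match m with
  | 0 => simp [pure01]; omega
  | 1 => rfl
  | m + 2 => rw [apply_eq_zero_of_not_involvesHighVar hα h (by omega),
      pure01_apply_of_two_le (by omega)]

theorem upAt_mem_Mon (hα : α ∈ Mon n d) (hi : i < n) (hpos : 0 < α i) :
    upAt i α ∈ Mon n d := by
  refine ⟨fun k hk => ?_, ?_⟩
  · simp [upAt, show k ≠ i by omega, show k ≠ i + 1 by omega, hα.1 k hk]
  · have hshift : ∀ k, upAt i α k + (if k = i then 1 else 0) =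
        α k + (if k = i + 1 then 1 else 0) := by
      intro k
      simp only [upAt]
      split_ifs <;> subst_vars <;> omega
    have hsum := Finset.sum_congr rfl fun k (_ : k ∈ range (n + 1)) => hshift k
    simp only [Finset.sum_add_distrib, Finset.sum_ite_eq', mem_range,
      show i < n + 1 by omega, show i + 1 < n + 1 by omega, if_true] at hsum
    rw [Nat.add_right_cancel hsum, hα.2]

theorem degLexGT_upAt (i : ℕ) (α : ℕ → ℕ) : degLexGT (upAt i α) α :=
  ⟨i + 1, by simp [upAt],
    fun k hk => by simp [upAt, show k ≠ i by omega, show k ≠ i + 1 by omega]⟩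

theorem InvolvesHighVar.upAt_zero (h : InvolvesHighVar n α) : InvolvesHighVar n (upAt 0 α) := by
  obtain ⟨j, hj, hjn, hpos⟩ := h
  exact ⟨j, hj, hjn, by simpa [upAt, show j ≠ 0 by omega, show j ≠ 1 by omega] using hpos⟩

theorem involvesHighVar_upAt (hi : 1 ≤ i) (hin : i < n) : InvolvesHighVar n (upAt i α) :=
  ⟨i + 1, by omega, hin, by simp [upAt]⟩

theorem upAt_zero_pure01 : upAt 0 (pure01 d k) = pure01 d (k + 1) := by
  funext m
  match m with
  | 0 => simp [upAt, pure01]; omega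
  | 1 => simp [upAt, pure01]
  | m + 2 => simp [upAt, pure01]

end Monomials

section Borel

variable {n d k s : ℕ} {B : Set (ℕ → ℕ)}

theorem pure01_mem_of_le (hn : 1 ≤ n) (hB : IsBorelSet n d B) (hs : pure01 d s ∈ B)
    (hsk : s ≤ k) (hk : k ≤ d) : pure01 d k ∈ B := by
  induction k, hsk using Nat.le_induction with
  | base => exact hs
  | succ k _ ih =>
    exact hB.2 _ (ih (by omega)) _ ⟨0, hn, by simp [pure01]; omega, upAt_zero_pure01.symm⟩

theorem regSat_le_of_mem (h : pure01 d k ∈ B) : regSat d B ≤ k := Nat.sInf_le h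

theorem pure01_notMem_of_lt_regSat (hk : k < regSat d B) : pure01 d k ∉ B :=
  Nat.notMem_of_lt_sInf hk

theorem regSat_eq (hk : pure01 d k ∈ B) (hlt : ∀ j < k, pure01 d j ∉ B) : regSat d B = k :=
  le_antisymm (regSat_le_of_mem hk) (le_csInf ⟨k, hk⟩ fun j hj => not_lt.1 fun h => hlt j h hj)

theorem pure01_self_mem (hn : 1 ≤ n) (hB : IsBorelSet n d B) (hN : (Mon n d \ B).ncard = d) :
    pure01 d d ∈ B := by
  by_contra h
  have hsub : pure01 d '' Set.Iic d ⊆ Mon n d \ B := by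
    rintro _ ⟨k, hk, rfl⟩
    exact ⟨pure01_mem_Mon hn hk, fun hkB => h (pure01_mem_of_le hn hB hkB hk le_rfl)⟩
  have hcard := Set.ncard_le_ncard hsub finite_Mon.sdiff
  rw [Set.ncard_image_of_injective _ (pure01_injective d), Set.ncard_Iic_nat, hN] at hcard
  omega

theorem regSat_le (hn : 1 ≤ n) (hB : IsBorelSet n d B) (hN : (Mon n d \ B).ncard = d) :
    regSat d B ≤ d :=
  regSat_le_of_mem (pure01_self_mem hn hB hN)

theorem pure01_regSat_mem (hn : 1 ≤ n) (hB : IsBorelSet n d B) (hN : (Mon n d \ B).ncard = d) :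
    pure01 d (regSat d B) ∈ B :=
  Nat.sInf_mem (s := {s | pure01 d s ∈ B}) ⟨d, pure01_self_mem hn hB hN⟩

theorem sdiff_eq_image_pure01_union_highCompl (hn : 1 ≤ n) (hB : IsBorelSet n d B)
    (hN : (Mon n d \ B).ncard = d) :
    Mon n d \ B = pure01 d '' Set.Iio (regSat d B) ∪ highCompl n d B := by
  ext γ
  constructor
  · rintro hγ
    by_cases hhigh : InvolvesHighVar n γ
    · exact Or.inr ⟨hγ, hhigh⟩
    have hγeq := eq_pure01_of_not_involvesHighVar hn hγ.1 hhigh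
    refine Or.inl ⟨γ 1, Set.mem_Iio.2 <| not_le.1 fun hle => hγ.2 ?_, hγeq.symm⟩
    exact hγeq ▸ pure01_mem_of_le hn hB (pure01_regSat_mem hn hB hN) hle
      (apply_le_of_mem_Mon hγ.1 1)
  · rintro (⟨k, hk, rfl⟩ | hγ)
    · exact ⟨pure01_mem_Mon hn ((Set.mem_Iio.1 hk).le.trans (regSat_le hn hB hN)),
        pure01_notMem_of_lt_regSat hk⟩
    · exact hγ.1

theorem ncard_highCompl (hn : 1 ≤ n) (hB : IsBorelSet n d B) (hN : (Mon n d \ B).ncard = d) :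
    (highCompl n d B).ncard = d - regSat d B := by
  have hdecomp := sdiff_eq_image_pure01_union_highCompl hn hB hN
  have hfin : (Mon n d \ B).Finite := finite_Mon.sdiff
  have hdisj : Disjoint (pure01 d '' Set.Iio (regSat d B)) (highCompl n d B) :=
    Set.disjoint_left.2 fun _ ⟨_, _, hk⟩ hγ => not_involvesHighVar_pure01 (hk ▸ hγ.2)
  have hcard := Set.ncard_union_eq hdisj (hfin.subset (hdecomp ▸ Set.subset_union_left))
    (hfin.subset (hdecomp ▸ Set.subset_union_right))
  rw [← hdecomp, hN, Set.ncard_image_of_injective _ (pure01_injective d),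
    Set.ncard_Iio_nat] at hcard
  omega

theorem eq_lexSegPts_of_regSat_eq (hn : 1 ≤ n) (hB : IsBorelSet n d B)
    (hN : (Mon n d \ B).ncard = d) (hreg : regSat d B = d) : B = lexSegPts n d := by
  have hempty : highCompl n d B = ∅ := (Set.ncard_eq_zero (finite_Mon.sdiff.subset
    fun _ hγ => hγ.1)).1 (by rw [ncard_highCompl hn hB hN, hreg, Nat.sub_self])
  ext γ
  constructor
  · intro hγ
    refine ⟨hB.1 hγ, or_iff_not_imp_left.2 fun hlow => ?_⟩
    rw [eq_pure01_of_not_involvesHighVar hn (hB.1 hγ) hlow] at hγ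
    exact hreg ▸ regSat_le_of_mem hγ
  · rintro ⟨hγM, hγ⟩
    by_contra hγB
    have hγC : γ ∈ Mon n d \ B := ⟨hγM, hγB⟩
    rw [sdiff_eq_image_pure01_union_highCompl hn hB hN, hempty, Set.union_empty, hreg] at hγC
    obtain ⟨k, hk, rfl⟩ := hγC
    rcases hγ with hhigh | hd
    · exact not_involvesHighVar_pure01 hhigh
    · exact (Set.mem_Iio.1 hk).not_ge hd

end Borel

theorem sdiff_insert_sdiff_singleton {α : Type*} {M B : Set α} {a b : α} (hb : b ∈ M)
    (hab : a ≠ b) : M \ insert a (B \ {b}) = insert b ((M \ B) \ {a}) := by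
  ext x
  simp only [Set.mem_sdiff, Set.mem_insert_iff, Set.mem_singleton_iff]
  grind

section Deformation

variable {n d : ℕ} {B : Set (ℕ → ℕ)}

theorem degLexMax_highCompl_spec (hn : 1 ≤ n) (hB : IsBorelSet n d B)
    (hN : (Mon n d \ B).ncard = d) (hlt : regSat d B < d) :
    degLexMax (highCompl n d B) ∈ highCompl n d B ∧ ∀ γ ∈ highCompl n d B,
      γ = degLexMax (highCompl n d B) ∨ degLexGT (degLexMax (highCompl n d B)) γ :=
  degLexMax_spec (fun _ hγ => hγ.1.1)
    (Set.nonempty_of_ncard_ne_zero (by rw [ncard_highCompl hn hB hN]; omega))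

theorem defStep_deformStep (hn : 1 ≤ n) (hB : IsBorelSet n d B)
    (hN : (Mon n d \ B).ncard = d) (hlt : regSat d B < d) :
    DefStep n d B (deformStep n d B) := by
  obtain ⟨⟨⟨hβM, hβB⟩, hβhigh⟩, hmax⟩ := degLexMax_highCompl_spec hn hB hN hlt
  exact ⟨_, hβM, hβB, hβhigh,
    fun γ hγM hγB hγhigh => hmax γ ⟨⟨hγM, hγB⟩, hγhigh⟩, rfl⟩

theorem isBorelSet_insert_sdiff (hn : 1 ≤ n) (hB : IsBorelSet n d B) {β : ℕ → ℕ}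
    (hβ : β ∈ highCompl n d B) (hmax : ∀ γ ∈ highCompl n d B, γ = β ∨ degLexGT β γ) :
    IsBorelSet n d (insert β (B \ {pure01 d (regSat d B)})) := by
  obtain ⟨⟨hβM, -⟩, hβhigh⟩ := hβ
  refine ⟨Set.insert_subset hβM (Set.sdiff_subset.trans hB.1), ?_⟩
  rintro α hα _ ⟨i, hin, hpos, rfl⟩
  obtain hαβ | ⟨hαB, -⟩ := hα
  · subst α
    have hhigh : InvolvesHighVar n (upAt i β) := by
      rcases Nat.eq_zero_or_pos i with rfl | hi
      exacts [hβhigh.upAt_zero, involvesHighVar_upAt hi hin]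
    have hmem : upAt i β ∈ B := by
      by_contra hnot
      rcases hmax _ ⟨⟨upAt_mem_Mon hβM hin hpos, hnot⟩, hhigh⟩ with h | h
      · exact degLexGT_irrefl β (by simpa only [h] using degLexGT_upAt i β)
      · exact degLexGT_irrefl β (degLexGT_trans h (degLexGT_upAt i β))
    exact Or.inr ⟨hmem, fun h =>
      not_involvesHighVar_pure01 (Set.mem_singleton_iff.1 h ▸ hhigh)⟩
  · refine Or.inr ⟨hB.2 α hαB _ ⟨i, hin, hpos, rfl⟩, fun h => ?_⟩
    rw [Set.mem_singleton_iff] at h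
    obtain rfl : i = 0 := by
      by_contra hi
      exact not_involvesHighVar_pure01 (h ▸ involvesHighVar_upAt (Nat.pos_of_ne_zero hi) hin)
    have hαlow : ¬ InvolvesHighVar n α :=
      fun hα => not_involvesHighVar_pure01 (h ▸ hα.upAt_zero)
    have hα1 : α 1 + 1 = regSat d B := by simpa [upAt, pure01] using congrFun h 1
    exact pure01_notMem_of_lt_regSat (by omega)
      (eq_pure01_of_not_involvesHighVar hn (hB.1 hαB) hαlow ▸ hαB)

theorem isBorelSet_deformStep (hn : 1 ≤ n) (hB : IsBorelSet n d B)
    (hN : (Mon n d \ B).ncard = d) (hlt : regSat d B < d) :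
    IsBorelSet n d (deformStep n d B) :=
  isBorelSet_insert_sdiff hn hB (degLexMax_highCompl_spec hn hB hN hlt).1
    (degLexMax_highCompl_spec hn hB hN hlt).2

theorem ncard_sdiff_deformStep (hn : 1 ≤ n) (hB : IsBorelSet n d B)
    (hN : (Mon n d \ B).ncard = d) (hlt : regSat d B < d) :
    (Mon n d \ deformStep n d B).ncard = d := by
  obtain ⟨⟨hβ, hβhigh⟩, -⟩ := degLexMax_highCompl_spec hn hB hN hlt
  have hp := pure01_regSat_mem hn hB hN
  rw [deformStep, sdiff_insert_sdiff_singleton (hB.1 hp)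
    fun h => not_involvesHighVar_pure01 (h ▸ hβhigh),
    Set.ncard_exchange (fun h => h.2 hp) hβ, hN]

theorem regSat_deformStep (hn : 1 ≤ n) (hB : IsBorelSet n d B)
    (hN : (Mon n d \ B).ncard = d) (hlt : regSat d B < d) :
    regSat d (deformStep n d B) = regSat d B + 1 := by
  obtain ⟨⟨-, hβhigh⟩, -⟩ := degLexMax_highCompl_spec hn hB hN hlt
  refine regSat_eq (Or.inr ⟨pure01_mem_of_le hn hB (pure01_regSat_mem hn hB hN) (by omega) hlt,
    fun h => by simpa using pure01_injective d h⟩) fun k hk hmem => ?_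
  rcases hmem with h | ⟨hkB, hks⟩
  · exact not_involvesHighVar_pure01 (h ▸ hβhigh)
  · rcases Nat.lt_succ_iff_lt_or_eq.1 hk with h | rfl
    exacts [pure01_notMem_of_lt_regSat h hkB, hks rfl]

end Deformation

/-- exactly d − reg consecutive DegLex-rational deformations, each raising
the regularity of the saturation by 1, lead from a Borel ideal of d points to the
lexsegment ideal. -/
theorem stmt_15 (n d : ℕ) (hn : 1 ≤ n) (B : Set (ℕ → ℕ)) (hB : IsBorelSet n d B)
    (hN : (Mon n d \ B).ncard = d) :
    ∃ f : ℕ → Set (ℕ → ℕ), f 0 = B ∧ f (d - regSat d B) = lexSegPts n d ∧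
      (∀ k, k < d - regSat d B → DefStep n d (f k) (f (k + 1))) ∧
      (∀ k, k < d - regSat d B → regSat d (f (k + 1)) = regSat d (f k) + 1) := by
  have hinv : ∀ k ≤ d - regSat d B, IsBorelSet n d ((deformStep n d)^[k] B) ∧
      (Mon n d \ (deformStep n d)^[k] B).ncard = d ∧
      regSat d ((deformStep n d)^[k] B) = regSat d B + k := by
    intro k hk
    induction k with
    | zero => exact ⟨hB, hN, rfl⟩
    | succ k ih =>
      obtain ⟨hBk, hNk, hregk⟩ := ih (by omega)
      have hlt : regSat d ((deformStep n d)^[k] B) < d := by omega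
      rw [Function.iterate_succ_apply', regSat_deformStep hn hBk hNk hlt, hregk]
      exact ⟨isBorelSet_deformStep hn hBk hNk hlt, ncard_sdiff_deformStep hn hBk hNk hlt, rfl⟩
  refine ⟨fun k => (deformStep n d)^[k] B, rfl, ?_, fun k hk => ?_, fun k hk => ?_⟩
  · dsimp only
    obtain ⟨hBk, hNk, hregk⟩ := hinv (d - regSat d B) le_rfl
    exact eq_lexSegPts_of_regSat_eq hn hBk hNk (by have := regSat_le hn hB hN; omega)
  · obtain ⟨hBk, hNk, hregk⟩ := hinv k hk.le
    simpa only [Function.iterate_succ_apply'] using defStep_deformStep hn hBk hNk (by omega)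
  · obtain ⟨hBk, hNk, hregk⟩ := hinv k hk.le
    simpa only [Function.iterate_succ_apply'] using regSat_deformStep hn hBk hNk (by omega)
end

section
/- Let ⪯ be a term ordering refining the Borel order, and suppose the Hilbert scheme data admits a hilb-segment Borel set S ⊆ P(n,r) with respect to ⪯ (every monomial of S is ⪯-greater than every monomial of its complement) such that |S ∩ P(n−j,r)| = b_j for each j. Then any other Borel set B ⊆ P(n,r), B ≠ S, with |B ∩ P(n−j,r)| = b_j for each j contains at least one index i and monomials x^α ∈ B, x^β ∉ B with min x^α = min x^β = i and x^α ≺ x^β. -/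
open Finset

lemma mon_finite (n r : ℕ) : (Mon n r).Finite := by
  have hsub : Mon n r ⊆ (fun f : Fin (n+1) → Fin (r+1) =>
      (fun k => if h : k < n+1 then (f ⟨k, h⟩ : ℕ) else 0)) '' Set.univ := by
    rintro α ⟨h0, hsum⟩
    refine ⟨fun i => ⟨α i, ?_⟩, Set.mem_univ _, ?_⟩
    · have hle : α (i : ℕ) ≤ r := by
        rw [← hsum]
        exact Finset.single_le_sum (fun k _ => Nat.zero_le _) (Finset.mem_range.mpr i.isLt)
      omega
    · funext k
      by_cases h : k < n+1
      · simp [h]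
      · simp [h, h0 k (by omega)]
  exact Set.Finite.subset (Set.Finite.image _ Set.finite_univ) hsub

lemma diffs_nonempty {X Y : Set (ℕ → ℕ)} (hX : X.Finite) (hY : Y.Finite)
    (h : X.ncard = Y.ncard) (hne : X ≠ Y) :
    (X \ Y).Nonempty ∧ (Y \ X).Nonempty := by
  constructor
  · rw [Set.nonempty_iff_ne_empty]
    intro he
    rw [Set.diff_eq_empty] at he
    exact hne (Set.eq_of_subset_of_ncard_le he h.ge hY)
  · rw [Set.nonempty_iff_ne_empty]
    intro he
    rw [Set.diff_eq_empty] at he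
    exact hne (Set.eq_of_subset_of_ncard_le he h.le hX).symm

/-- if a hilb-segment Borel set S w.r.t. a term ordering refining the Borel
order exists, then any other Borel set with the same section cardinalities contains a
monomial ⪯-smaller than some monomial of its complement with the same minimal variable. -/
theorem stmt_18 (n r : ℕ) (le : (ℕ → ℕ) → (ℕ → ℕ) → Prop)
    (hrefl : ∀ a, le a a)
    (htrans : ∀ a b c, le a b → le b c → le a c)
    (hantisymm : ∀ a b, le a b → le b a → a = b)
    (htotal : ∀ a b, le a b ∨ le b a)
    (hrefine : ∀ a b, geB n a b → le b a)
    (S : Set (ℕ → ℕ)) (hS : IsBorelSet n r S)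
    (hseg : ∀ α ∈ S, ∀ β ∈ Mon n r \ S, le β α ∧ α ≠ β)
    (B : Set (ℕ → ℕ)) (hB : IsBorelSet n r B) (hne : B ≠ S)
    (hcard : ∀ j, (S ∩ {γ | ∀ k, k < j → γ k = 0}).ncard
                = (B ∩ {γ | ∀ k, k < j → γ k = 0}).ncard) :
    ∃ i, ∃ α ∈ B, ∃ β ∈ Mon n r \ B,
      (∀ k, k < i → α k = 0) ∧ α i ≠ 0 ∧
      (∀ k, k < i → β k = 0) ∧ β i ≠ 0 ∧
      le α β ∧ α ≠ β := by
  classical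
  have hMfin := mon_finite n r
  have hSfin : S.Finite := hMfin.subset hS.1
  have hBfin : B.Finite := hMfin.subset hB.1
  set M : ℕ → Set (ℕ → ℕ) := fun j => {γ | ∀ k, k < j → γ k = 0} with hMdef
  -- total cardinalities agree
  have h0 : S.ncard = B.ncard := by
    have := hcard 0
    simpa [hMdef, Set.inter_eq_left.mpr, Set.eq_univ_iff_forall] using this
  obtain ⟨⟨β0, hβ0S, hβ0B⟩, ⟨α, hαB, hαS⟩⟩ :=
    diffs_nonempty hSfin hBfin h0 (fun h => hne h.symm)
  have hαM : α ∈ Mon n r := hB.1 hαB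
  have hβ0M : β0 ∈ Mon n r := hS.1 hβ0S
  -- α is nonzero somewhere
  have hα0 : ∃ k, α k ≠ 0 := by
    by_contra h
    push_neg at h
    have hr : r = 0 := by
      rw [← hαM.2]
      exact Finset.sum_eq_zero (fun k _ => h k)
    have hβz : ∀ k, β0 k = 0 := by
      intro k
      by_cases hk : k ≤ n
      · have := hβ0M.2
        rw [hr] at this
        exact (Finset.sum_eq_zero_iff.mp this) k (Finset.mem_range.mpr (by omega))
      · exact hβ0M.1 k (by omega)
    have : α = β0 := funext (fun k => by rw [h k, hβz k])
    exact hβ0B (this ▸ hαB)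
  set i := Nat.find hα0 with hidef
  have hαi : α i ≠ 0 := Nat.find_spec hα0
  have hαlt : ∀ k, k < i → α k = 0 := by
    intro k hk
    by_contra hc
    exact absurd hk (not_lt.mpr (Nat.find_le hc))
  -- sections with min index exactly i
  have hMsub : ∀ (X : Set (ℕ → ℕ)), X ∩ M (i+1) ⊆ X ∩ M i := by
    intro X x hx
    exact ⟨hx.1, fun k hk => hx.2 k (by omega)⟩
  have hsplit : ∀ (X : Set (ℕ → ℕ)),
      X ∩ (M i \ M (i+1)) = (X ∩ M i) \ (X ∩ M (i+1)) := by
    intro X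
    ext x
    constructor
    · rintro ⟨hxX, hxi, hxi1⟩
      exact ⟨⟨hxX, hxi⟩, fun hc => hxi1 hc.2⟩
    · rintro ⟨⟨hxX, hxi⟩, hxi1⟩
      exact ⟨hxX, hxi, fun hc => hxi1 ⟨hxX, hc⟩⟩
  have hcardL : (S ∩ (M i \ M (i+1))).ncard = (B ∩ (M i \ M (i+1))).ncard := by
    rw [hsplit S, hsplit B,
      Set.ncard_diff (hMsub S) (hSfin.subset Set.inter_subset_left),
      Set.ncard_diff (hMsub B) (hBfin.subset Set.inter_subset_left),
      hcard i, hcard (i+1)]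
  have hαL : α ∈ B ∩ (M i \ M (i+1)) := by
    refine ⟨hαB, fun k hk => hαlt k hk, fun hc => hαi (hc i (by omega))⟩
  have hneL : S ∩ (M i \ M (i+1)) ≠ B ∩ (M i \ M (i+1)) := by
    intro h
    exact hαS (h ▸ hαL).1
  obtain ⟨⟨β, hβSL, hβBL⟩, -⟩ :=
    diffs_nonempty (hSfin.subset Set.inter_subset_left)
      (hBfin.subset Set.inter_subset_left) hcardL hneL
  have hβS : β ∈ S := hβSL.1
  have hβnB : β ∉ B := fun hc => hβBL ⟨hc, hβSL.2⟩
  have hβlt : ∀ k, k < i → β k = 0 := hβSL.2.1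
  have hβi : β i ≠ 0 := by
    intro hc
    exact hβSL.2.2 (fun k hk => by
      rcases Nat.lt_succ_iff_lt_or_eq.mp hk with h | h
      · exact hβlt k h
      · rw [h]; exact hc)
  have hmain := hseg β hβS α ⟨hαM, hαS⟩
  exact ⟨i, α, hαB, β, ⟨hS.1 hβS, hβnB⟩, hαlt, hαi, hβlt, hβi, hmain.1, hmain.2.symm⟩
end
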